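/- Let F be a number field with ring of integers O_F. The map that sends a finite idele (x_v)_v to the fractional ideal ∏_v 𝔭_v^{v(x_v)} it generates induces a group isomorphism from the quotient of the finite idele group (the unit group of the finite adele ring of F) by the subgroup generated by the image of F^× (principal ideles) and by the subgroup ∏_v O_v^× of everywhere-integral unit ideles, onto the class group Cl(O_F). -/

import Mathlib

open IsDedekindDomain IsDedekindDomain.HeightOneSpectrum NumberField
open scoped nonZeroDivisors

variable (R K : Type) [CommRing R] [IsDedekindDomain R] [Field K] [Algebra R K]
  [IsFractionRing R K]

/-- The (normalized additive) valuation `v(x) ∈ ℤ` of an element `x` of the `v`-adic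
completion of `K` (with junk value `0` when `x = 0`), so that a uniformizer at `v` has
valuation `1`. -/
noncomputable def ideleAddVal (v : HeightOneSpectrum R) (x : v.adicCompletion K) : ℤ :=
  if h : Valued.v x = 0 then 0 else - Multiplicative.toAdd (WithZero.unzero h)

/-- The nonzero prime ideal `𝔭ᵥ`, as an invertible fractional ideal of `R` in `K`. -/
noncomputable def primeAsFractionalIdealUnit (v : HeightOneSpectrum R) :
    (FractionalIdeal R⁰ K)ˣ :=
  Units.mk0 (v.asIdeal : FractionalIdeal R⁰ K)
    (FractionalIdeal.coeIdeal_ne_zero.mpr v.ne_bot)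

/-- The map sending a finite idele `(xᵥ)ᵥ` to the fractional ideal `∏ᵥ 𝔭ᵥ^(v(xᵥ))` it
generates. -/
noncomputable def ideleToFractionalIdeal (x : (FiniteAdeleRing R K)ˣ) :
    (FractionalIdeal R⁰ K)ˣ :=
  ∏ᶠ v : HeightOneSpectrum R,
    primeAsFractionalIdealUnit R K v ^ ideleAddVal R K v (x.val.val v)

/-- The subgroup `∏ᵥ Oᵥˣ` of everywhere-integral unit ideles inside the finite idele
group: those ideles `x` such that, at every place `v`, both `xᵥ` and `xᵥ⁻¹` are
`v`-adic integers. -/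
noncomputable def integralUnitIdeles : Subgroup (FiniteAdeleRing R K)ˣ where
  carrier := {x | ∀ v : HeightOneSpectrum R,
    x.val.val v ∈ v.adicCompletionIntegers K ∧ x.inv.val v ∈ v.adicCompletionIntegers K}
  one_mem' := fun v => ⟨one_mem _, one_mem _⟩
  mul_mem' := by
    intro a b ha hb v
    exact ⟨mul_mem (ha v).1 (hb v).1, mul_mem (hb v).2 (ha v).2⟩
  inv_mem' := by
    intro a ha v
    exact ⟨(ha v).2, (ha v).1⟩

/-- The subgroup of the finite idele group generated by the principal ideles (the image
of `Kˣ`) and the everywhere-integral unit ideles `∏ᵥ Oᵥˣ`. -/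
noncomputable def principalAndIntegralUnitIdeles : Subgroup (FiniteAdeleRing R K)ˣ :=
  (Units.map (algebraMap K (FiniteAdeleRing R K)).toMonoidHom).range ⊔ integralUnitIdeles R K

/-! The `v`-adic exponent of a finite idele `x` is the `v`-adic order of the fractional
ideal `ideleToFractionalIdeal x`, and a unit fractional ideal is determined by its orders.
Hence the map is a homomorphism whose kernel is `∏ᵥ Oᵥˣ`; it sends the principal idele of
`k ∈ Kˣ` to `(k)`, because the `v`-adic valuation of `k` is read off the factorization of
`(k)`; and it is onto, since an idele may be prescribed place by place as powers of
uniformizers, almost all trivial. So the preimage of the principal ideals is `Kˣ · ∏ᵥ Oᵥˣ`,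
and the first isomorphism theorem applies. -/

open FractionalIdeal WithZero

variable {R K}

theorem FractionalIdeal.units_eq_of_forall_count_eq {I J : (FractionalIdeal R⁰ K)ˣ}
    (h : ∀ v, count K v (I : FractionalIdeal R⁰ K) = count K v J) : I = J := by
  ext1
  rw [← finprod_heightOneSpectrum_factorization' K I.ne_zero,
    ← finprod_heightOneSpectrum_factorization' K J.ne_zero]
  simp_rw [h]

section ideleAddVal

variable {v : HeightOneSpectrum R}

theorem ideleAddVal_eq_neg_log (x : v.adicCompletion K) :
    ideleAddVal R K v x = -log (Valued.v x) := by
  unfold ideleAddVal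
  split_ifs with hx
  · rw [hx, log_zero, neg_zero]
  · rw [toAdd_unzero_eq_log]

theorem valued_eq_exp_neg_ideleAddVal {x : v.adicCompletion K} (hx : x ≠ 0) :
    Valued.v x = exp (-ideleAddVal R K v x) := by
  rw [ideleAddVal_eq_neg_log, neg_neg, exp_log ((Valued.v).ne_zero_iff.mpr hx)]

theorem ideleAddVal_eq_zero_iff {x : v.adicCompletion K} (hx : x ≠ 0) :
    ideleAddVal R K v x = 0 ↔ Valued.v x = 1 := by
  rw [valued_eq_exp_neg_ideleAddVal hx, exp_eq_one, neg_eq_zero]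

theorem ideleAddVal_mul {x y : v.adicCompletion K} (hx : x ≠ 0) (hy : y ≠ 0) :
    ideleAddVal R K v (x * y) = ideleAddVal R K v x + ideleAddVal R K v y := by
  simp only [ideleAddVal_eq_neg_log, map_mul,
    log_mul ((Valued.v).ne_zero_iff.mpr hx) ((Valued.v).ne_zero_iff.mpr hy), neg_add]

theorem ideleAddVal_eq_of_valued_eq {x : v.adicCompletion K} {n : ℤ}
    (h : Valued.v x = exp (-n)) : ideleAddVal R K v x = n := by
  rw [ideleAddVal_eq_neg_log, h, log_exp, neg_neg]

end ideleAddVal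

section count

variable (v : HeightOneSpectrum R)

theorem valuation_algebraMap_eq_exp_neg_count_spanSingleton {r : R} (hr : r ≠ 0) :
    v.valuation K (algebraMap R K r) =
      exp (-count K v (spanSingleton R⁰ (algebraMap R K r))) := by
  rw [valuation_of_algebraMap, intValuation_if_neg _ hr, ← coeIdeal_span_singleton,
    count_coe K v (by simpa [Ideal.span_singleton_eq_bot] using hr)]

theorem valuation_eq_exp_neg_count_spanSingleton {k : K} (hk : k ≠ 0) :
    v.valuation K k = exp (-count K v (spanSingleton R⁰ k)) := by
  obtain ⟨r, s, hs, rfl⟩ := IsFractionRing.div_surjective (A := R) k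
  have hs0 : s ≠ 0 := nonZeroDivisors.ne_zero hs
  have hr0 : r ≠ 0 := by rintro rfl; simp at hk
  have hspan {a : R} (ha : a ≠ 0) : spanSingleton R⁰ (algebraMap R K a) ≠ 0 := by
    rw [ne_eq, spanSingleton_eq_zero_iff]
    exact (map_ne_zero_iff _ (IsFractionRing.injective R K)).mpr ha
  rw [map_div₀, ← spanSingleton_div_spanSingleton, div_eq_mul_inv (_ : FractionalIdeal R⁰ K),
    count_mul K v (hspan hr0) (inv_ne_zero (hspan hs0)), count_inv,
    valuation_algebraMap_eq_exp_neg_count_spanSingleton v hr0,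
    valuation_algebraMap_eq_exp_neg_count_spanSingleton v hs0, ← exp_sub]
  congr 1
  ring

end count

section idele

variable (x y : (FiniteAdeleRing R K)ˣ)

theorem FiniteAdeleRing.units_apply_ne_zero (v : HeightOneSpectrum R) : x.val.val v ≠ 0 :=
  (FiniteAdeleRing.isUnit_iff.mp x.isUnit).1 v

theorem ideleAddVal_units_eventually_eq_zero :
    ∀ᶠ v in Filter.cofinite, ideleAddVal R K v (x.val.val v) = 0 :=
  (FiniteAdeleRing.isUnit_iff.mp x.isUnit).2.mono fun v hv =>
    (ideleAddVal_eq_zero_iff (FiniteAdeleRing.units_apply_ne_zero x v)).mpr hv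

theorem coe_ideleToFractionalIdeal :
    (ideleToFractionalIdeal R K x : FractionalIdeal R⁰ K) =
      ∏ᶠ v : HeightOneSpectrum R,
        (v.asIdeal : FractionalIdeal R⁰ K) ^ ideleAddVal R K v (x.val.val v) := by
  have hfin : (Function.mulSupport fun v =>
      primeAsFractionalIdealUnit R K v ^ ideleAddVal R K v (x.val.val v)).Finite :=
    (Filter.eventually_cofinite.mp (ideleAddVal_units_eventually_eq_zero x)).subset
      fun v hv h0 => hv (by dsimp only; rw [h0, zpow_zero])
  rw [ideleToFractionalIdeal, ← Units.coeHom_apply, (Units.coeHom _).map_finprod hfin]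
  simp only [Units.coeHom_apply, Units.val_zpow_eq_zpow_val]
  rfl

theorem count_ideleToFractionalIdeal (v : HeightOneSpectrum R) :
    count K v (ideleToFractionalIdeal R K x : FractionalIdeal R⁰ K) =
      ideleAddVal R K v (x.val.val v) := by
  rw [coe_ideleToFractionalIdeal, count_finprod K v _ (ideleAddVal_units_eventually_eq_zero x)]

theorem ideleToFractionalIdeal_mul :
    ideleToFractionalIdeal R K (x * y) =
      ideleToFractionalIdeal R K x * ideleToFractionalIdeal R K y :=
  units_eq_of_forall_count_eq fun v => by
    rw [Units.val_mul, count_mul K v (Units.ne_zero _) (Units.ne_zero _),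
      count_ideleToFractionalIdeal, count_ideleToFractionalIdeal, count_ideleToFractionalIdeal]
    exact ideleAddVal_mul (FiniteAdeleRing.units_apply_ne_zero x v)
      (FiniteAdeleRing.units_apply_ne_zero y v)

variable (R K) in
noncomputable def ideleToFractionalIdealHom :
    (FiniteAdeleRing R K)ˣ →* (FractionalIdeal R⁰ K)ˣ :=
  MonoidHom.mk' (ideleToFractionalIdeal R K) ideleToFractionalIdeal_mul

theorem mem_integralUnitIdeles_iff :
    x ∈ integralUnitIdeles R K ↔ ∀ v, Valued.v (x.val.val v) = 1 := by
  refine forall_congr' fun v => ?_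
  have hmul : x.val.val v * x.inv.val v = 1 := congr_arg (·.val v) x.val_inv
  have hinv : Valued.v (x.inv.val v) = (Valued.v (x.val.val v))⁻¹ :=
    eq_inv_of_mul_eq_one_right (by rw [← map_mul, hmul, map_one])
  rw [mem_adicCompletionIntegers, mem_adicCompletionIntegers, hinv,
    inv_le_one₀ ((Valued.v).pos_iff.mpr (FiniteAdeleRing.units_apply_ne_zero x v)),
    le_antisymm_iff]

theorem ker_ideleToFractionalIdealHom :
    (ideleToFractionalIdealHom R K).ker = integralUnitIdeles R K := by
  ext x
  rw [MonoidHom.mem_ker, mem_integralUnitIdeles_iff]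
  constructor
  · intro h v
    rw [← ideleAddVal_eq_zero_iff (FiniteAdeleRing.units_apply_ne_zero x v),
      ← count_ideleToFractionalIdeal]
    exact (congr_arg (count K v ·.val) h).trans (count_one K v)
  · intro h
    refine units_eq_of_forall_count_eq fun v => ?_
    rw [Units.val_one, count_one]
    exact (count_ideleToFractionalIdeal x v).trans
      ((ideleAddVal_eq_zero_iff (FiniteAdeleRing.units_apply_ne_zero x v)).mpr (h v))

theorem ideleToFractionalIdealHom_comp_algebraMap :
    (ideleToFractionalIdealHom R K).comp
      (Units.map (algebraMap K (FiniteAdeleRing R K)).toMonoidHom) = toPrincipalIdeal R K := by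
  ext1 k
  refine units_eq_of_forall_count_eq fun v => ?_
  rw [coe_toPrincipalIdeal]
  refine (count_ideleToFractionalIdeal _ v).trans (ideleAddVal_eq_of_valued_eq ?_)
  exact (valuedAdicCompletion_eq_valuation' v (k : K)).trans
    (valuation_eq_exp_neg_count_spanSingleton v k.ne_zero)

theorem exists_units_ideleAddVal_eq (n : HeightOneSpectrum R → ℤ)
    (hn : ∀ᶠ v in Filter.cofinite, n v = 0) :
    ∃ x : (FiniteAdeleRing R K)ˣ, ∀ v, ideleAddVal R K v (x.val.val v) = n v := by
  choose π hπ using fun v : HeightOneSpectrum R => v.valuation_exists_uniformizer K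
  have hval (v : HeightOneSpectrum R) :
      Valued.v ((π v : v.adicCompletion K) ^ n v) = exp (-n v) := by
    rw [map_zpow₀, valuedAdicCompletion_eq_valuation', hπ, ← exp_zsmul,
      smul_neg, zsmul_one, Int.cast_id]
  let a : FiniteAdeleRing R K := ⟨fun v => (π v : v.adicCompletion K) ^ n v,
    hn.mono fun v hv => by simp only [hv, zpow_zero, SetLike.mem_coe, one_mem]⟩
  have ha : IsUnit a := FiniteAdeleRing.isUnit_iff.mpr
    ⟨fun v h => exp_ne_zero (((hval v).symm.trans (congr_arg Valued.v h)).trans (map_zero _)),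
      hn.mono fun v hv => (hval v).trans (by rw [hv, neg_zero, exp_zero])⟩
  exact ⟨ha.unit, fun v => ideleAddVal_eq_of_valued_eq (hval v)⟩

theorem ideleToFractionalIdeal_surjective : Function.Surjective (ideleToFractionalIdeal R K) := by
  intro I
  obtain ⟨x, hx⟩ := exists_units_ideleAddVal_eq (K := K)
    (fun v => count K v (I : FractionalIdeal R⁰ K)) (finite_factors _)
  exact ⟨x, units_eq_of_forall_count_eq fun v => by rw [count_ideleToFractionalIdeal, hx]⟩

end idele

theorem ClassGroup.mk_surjective :
    Function.Surjective (ClassGroup.mk K : (FractionalIdeal R⁰ K)ˣ →* ClassGroup R) := by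
  rintro ⟨J⟩
  exact ⟨Units.map (canonicalEquiv R⁰ (FractionRing R) K : _ →* _) J,
    by rw [ClassGroup.mk_canonicalEquiv, ClassGroup.Quot_mk_eq_mk]⟩

theorem ClassGroup.ker_mk : (ClassGroup.mk K).ker = (toPrincipalIdeal R K).range := by
  ext I
  rw [MonoidHom.mem_ker, ClassGroup.mk_eq_one_iff, isPrincipal_iff, mem_principal_ideals_iff]
  simp_rw [eq_comm]

theorem ker_classGroupMk_comp_ideleToFractionalIdealHom :
    ((ClassGroup.mk K).comp (ideleToFractionalIdealHom R K)).ker =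
      principalAndIntegralUnitIdeles R K := by
  rw [← MonoidHom.comap_ker, ClassGroup.ker_mk, ← ideleToFractionalIdealHom_comp_algebraMap,
    MonoidHom.range_comp, Subgroup.comap_map_eq, ker_ideleToFractionalIdealHom]
  rfl

variable (R K) in
noncomputable def ideleClassGroupEquiv :
    ((FiniteAdeleRing R K)ˣ ⧸ principalAndIntegralUnitIdeles R K) ≃* ClassGroup R :=
  (QuotientGroup.quotientMulEquivOfEq ker_classGroupMk_comp_ideleToFractionalIdealHom.symm).trans
    (QuotientGroup.quotientKerEquivOfSurjective _
      (ClassGroup.mk_surjective.comp ideleToFractionalIdeal_surjective))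

theorem ideleClassGroupEquiv_mk (x : (FiniteAdeleRing R K)ˣ) :
    ideleClassGroupEquiv R K x = ClassGroup.mk K (ideleToFractionalIdeal R K x) :=
  rfl

/-- **The idele-theoretic description of the class group.**  For a number field `F` with
ring of integers `𝓞 F`, the map sending a finite idele `(xᵥ)ᵥ` to (the class of) the
fractional ideal `∏ᵥ 𝔭ᵥ^(v(xᵥ))` it generates induces a group isomorphism from the
quotient of the finite idele group `(𝔸_F^fin)ˣ` by the subgroup generated by the
principal ideles `Fˣ` and the integral unit ideles `∏ᵥ Oᵥˣ`, onto the class group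
`Cl(𝓞 F)`. -/
theorem idele_class_group_iso_classGroup (F : Type) [Field F] [NumberField F] :
    ∃ iso : ((FiniteAdeleRing (𝓞 F) F)ˣ ⧸ principalAndIntegralUnitIdeles (𝓞 F) F)
        ≃* ClassGroup (𝓞 F),
      ∀ x : (FiniteAdeleRing (𝓞 F) F)ˣ,
        iso (QuotientGroup.mk x) = ClassGroup.mk F (ideleToFractionalIdeal (𝓞 F) F x) :=
  ⟨ideleClassGroupEquiv (𝓞 F) F, ideleClassGroupEquiv_mk⟩
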